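/- For all real x, y and λ > 0, ∫_y^∞ Φ(λ + (x−z)/(2λ)) e^{−z} (z⁴/8 − z²/2 − 2) dz = (y⁴ + 4y³ + 8y² + 16y)/8 · e^{−y} Φ(λ + (x−y)/(2λ)) + (4λ⁶x − 3λ⁴x² + λ²x³ − 2λ⁸ − 8λ⁶ − x⁴/8 − 2λ²x − x³/2 + 2λ⁴ + 6λ⁴x − x² − 2x) e^{−x} (1 − Φ(λ + (y−x)/(2λ))) + (2λ⁷ − λx³/4 − λ⁵y + λ³y²/2 + λ³xy − 3λ⁵x + 3λ³x²/2 − λy³/4 − λy²x/4 − λyx²/4 − λ³y − λy² − λxy − λ³x − λx² − 4λ³ + 6λ⁵ − 2λx − 2λy − 4λ) e^{−x} φ(λ + (y−x)/(2λ)). -/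

import Mathlib

open Real MeasureTheory Filter Set

/-- Standard normal density. -/
noncomputable def phi (t : ℝ) : ℝ := (Real.sqrt (2 * Real.pi))⁻¹ * Real.exp (-t ^ 2 / 2)

/-- Standard normal distribution function. -/
noncomputable def Phi (t : ℝ) : ℝ := ∫ s in Set.Iic t, phi s

/-!
The right-hand side, as a function `F` of the lower limit, has the shape
`A(z) e^{-z} Φ(u) + c e^{-x} (1 - Φ(v)) + B(z) e^{-x} φ(v)` with `u = λ + (x - z)/(2λ)`,
`v = λ + (z - x)/(2λ)` and polynomials `A`, `B`; it vanishes at `+∞`, so it suffices that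
`F' = -Φ(u) e^{-z} (z⁴/8 - z²/2 - 2)`. Since `u² - v² = 2(x - z)`, the Gaussian factor
produced by differentiating `Φ(u)` is `e^{-z} φ(u) = e^{-x} φ(v)`, so every `φ`-term carries the
same factor and they cancel exactly when `B' - (v/(2λ)) B = (A + c)/(2λ)`. The `Φ(u)`-terms
then leave `(A' - A) e^{-z} Φ(u)`, which fixes `A` by `A - A' = z⁴/8 - z²/2 - 2`.
-/

open Polynomial ProbabilityTheory Topology

lemma phi_eq_gaussianPDFReal : phi = gaussianPDFReal 0 1 := by
  ext t
  simp [phi, gaussianPDFReal]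

lemma Phi_eq_cdf_gaussianReal : Phi = cdf (gaussianReal 0 1) := by
  ext t
  rw [cdf_eq_real, measureReal_def, gaussianReal_apply_eq_integral _ one_ne_zero,
    ENNReal.toReal_ofReal (setIntegral_nonneg measurableSet_Iic fun s _ ↦
      gaussianPDFReal_nonneg _ _ s), Phi, phi_eq_gaussianPDFReal]

lemma abs_Phi_le_one (t : ℝ) : |Phi t| ≤ 1 := by
  rw [Phi_eq_cdf_gaussianReal, abs_of_nonneg (cdf_nonneg _ t)]
  exact cdf_le_one _ t

lemma tendsto_Phi_atTop : Tendsto Phi atTop (𝓝 1) :=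
  Phi_eq_cdf_gaussianReal ▸ tendsto_cdf_atTop _

lemma abs_phi_le_one (t : ℝ) : |phi t| ≤ 1 := by
  have h2pi : 1 ≤ √(2 * π) := Real.one_le_sqrt.mpr (by linarith [Real.pi_gt_three])
  rw [phi, abs_of_nonneg (by positivity)]
  calc (√(2 * π))⁻¹ * exp (-t ^ 2 / 2) ≤ 1 * 1 := by
        gcongr
        · exact inv_le_one_of_one_le₀ h2pi
        · exact exp_le_one_iff.mpr (by nlinarith [sq_nonneg t])
    _ = 1 := one_mul 1

lemma continuous_phi : Continuous phi := by
  unfold phi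
  fun_prop

lemma hasDerivAt_Phi (t : ℝ) : HasDerivAt Phi (phi t) t := by
  have hint : Integrable phi := phi_eq_gaussianPDFReal ▸ integrable_gaussianPDFReal 0 1
  have hPhi : (fun u ↦ Phi 0 + ∫ s in (0 : ℝ)..u, phi s) = Phi := by
    ext u
    rw [← intervalIntegral.integral_Iic_sub_Iic hint.integrableOn hint.integrableOn, Phi, Phi]
    ring
  rw [← hPhi]
  exact (intervalIntegral.integral_hasDerivAt_right hint.intervalIntegrable
    continuous_phi.aestronglyMeasurable.stronglyMeasurableAtFilter
    continuous_phi.continuousAt).const_add _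

@[fun_prop]
lemma continuous_Phi : Continuous Phi :=
  continuous_iff_continuousAt.mpr fun t ↦ (hasDerivAt_Phi t).continuousAt

lemma hasDerivAt_phi (t : ℝ) : HasDerivAt phi (-t * phi t) t := by
  unfold phi
  refine ((((hasDerivAt_pow 2 t).fun_neg).div_const 2).exp).const_mul _ |>.congr_deriv ?_
  norm_num
  ring

lemma Polynomial.isLittleO_eval_exp_mul_atTop (p : ℝ[X]) {b : ℝ} (hb : 0 < b) :
    (fun z ↦ p.eval z) =o[atTop] fun z ↦ exp (b * z) :=
  (p.isBigO_atTop_of_degree_le (X ^ p.natDegree) (by simp)).trans_isLittleO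
    (by simpa using isLittleO_pow_exp_pos_mul_atTop p.natDegree hb)

lemma Polynomial.tendsto_eval_mul_exp_neg_atTop (p : ℝ[X]) :
    Tendsto (fun z ↦ p.eval z * exp (-z)) atTop (𝓝 0) := by
  simpa [div_eq_mul_inv, ← exp_neg] using
    (p.isLittleO_eval_exp_mul_atTop one_pos).tendsto_div_nhds_zero

lemma Polynomial.integrableOn_Ioi_eval_mul_exp_neg (p : ℝ[X]) (y : ℝ) :
    IntegrableOn (fun z ↦ p.eval z * exp (-z)) (Ioi y) := by
  refine integrable_of_isBigO_exp_neg (b := 1 / 2) one_half_pos (by fun_prop) ?_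
  refine ((p.isLittleO_eval_exp_mul_atTop one_half_pos).mul_isBigO
    (Asymptotics.isBigO_refl (fun z ↦ exp (-z)) atTop)).isBigO.congr_right fun z ↦ ?_
  rw [← exp_add]
  ring_nf

section Primitive

variable {x l : ℝ}

noncomputable def gaussExpPrimitive (x l c : ℝ) (A B : ℝ[X]) (z : ℝ) : ℝ :=
  A.eval z * exp (-z) * Phi (l + (x - z) / (2 * l))
    + c * exp (-x) * (1 - Phi (l + (z - x) / (2 * l)))
    + B.eval z * exp (-x) * phi (l + (z - x) / (2 * l))

lemma exp_neg_mul_phi_swap (hl : l ≠ 0) (z : ℝ) :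
    exp (-z) * phi (l + (x - z) / (2 * l)) = exp (-x) * phi (l + (z - x) / (2 * l)) := by
  rw [phi, phi, mul_left_comm, mul_left_comm (exp (-x)), ← exp_add, ← exp_add]
  congr 2
  field_simp
  ring

lemma hasDerivAt_gaussExpPrimitive (hl : l ≠ 0) (c : ℝ) (A B : ℝ[X]) (z : ℝ)
    (hAB : B.derivative.eval z - (l + (z - x) / (2 * l)) / (2 * l) * B.eval z
      = (A.eval z + c) / (2 * l)) :
    HasDerivAt (gaussExpPrimitive x l c A B)
      (-(Phi (l + (x - z) / (2 * l)) * exp (-z) * (A - derivative A).eval z)) z := by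
  have hu : HasDerivAt (fun z ↦ l + (x - z) / (2 * l)) (-1 / (2 * l)) z :=
    (((hasDerivAt_id z).const_sub x).div_const _).const_add l
  have hv : HasDerivAt (fun z ↦ l + (z - x) / (2 * l)) (1 / (2 * l)) z :=
    (((hasDerivAt_id z).sub_const x).div_const _).const_add l
  have h1 := ((A.hasDerivAt z).mul (hasDerivAt_neg' z).exp).mul ((hasDerivAt_Phi _).comp z hu)
  have h2 := (((hasDerivAt_Phi _).comp z hv).const_sub 1).const_mul (c * exp (-x))
  have h3 := ((B.hasDerivAt z).mul_const (exp (-x))).mul ((hasDerivAt_phi _).comp z hv)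
  refine ((h1.add h2).add h3).congr_deriv ?_
  simp only [eval_sub, Function.comp_apply, Pi.mul_apply]
  linear_combination (exp (-x) * phi (l + (z - x) / (2 * l))) * hAB
    - A.eval z / (2 * l) * exp_neg_mul_phi_swap hl z

lemma tendsto_gaussExpPrimitive_atTop (hl : 0 < l) (c : ℝ) (A B : ℝ[X]) :
    Tendsto (gaussExpPrimitive x l c A B) atTop (𝓝 0) := by
  have hv : Tendsto (fun z ↦ l + (z - x) / (2 * l)) atTop atTop :=
    tendsto_atTop_add_const_left _ _ <|
      (tendsto_atTop_add_const_right _ (-x) tendsto_id).atTop_div_const (by positivity)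
  have h1 := A.tendsto_eval_mul_exp_neg_atTop.zero_mul_isBoundedUnder_le
    (isBoundedUnder_of ⟨1, fun z ↦ abs_Phi_le_one (l + (x - z) / (2 * l))⟩)
  have h2 := ((tendsto_Phi_atTop.comp hv).const_sub 1).const_mul (c * exp (-x))
  have h3 := B.tendsto_eval_mul_exp_neg_atTop.zero_mul_isBoundedUnder_le
    (isBoundedUnder_of ⟨1, fun z ↦ abs_phi_le_one (l + (x - z) / (2 * l))⟩)
  convert (h1.add h2).add h3 using 1
  · ext z
    simp only [gaussExpPrimitive, Function.comp_apply, mul_assoc,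
      exp_neg_mul_phi_swap hl.ne']
  · simp

theorem integral_Ioi_Phi_mul_exp_neg_mul_eval (hl : 0 < l) (c y : ℝ) (A B : ℝ[X])
    (hAB : ∀ z, B.derivative.eval z - (l + (z - x) / (2 * l)) / (2 * l) * B.eval z
      = (A.eval z + c) / (2 * l)) :
    ∫ z in Ioi y, Phi (l + (x - z) / (2 * l)) * exp (-z) * (A - derivative A).eval z
      = gaussExpPrimitive x l c A B y := by
  have hint : IntegrableOn
      (fun z ↦ Phi (l + (x - z) / (2 * l)) * exp (-z) * (A - derivative A).eval z) (Ioi y) := by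
    refine (((A - derivative A).integrableOn_Ioi_eval_mul_exp_neg y).bdd_mul (by fun_prop)
      (ae_of_all _ fun z ↦ abs_Phi_le_one (l + (x - z) / (2 * l)))).congr
      (ae_of_all _ fun z ↦ by ring)
  have key := integral_Ioi_of_hasDerivAt_of_tendsto'
    (fun z _ ↦ hasDerivAt_gaussExpPrimitive hl.ne' c A B z (hAB z)) hint.neg
    (tendsto_gaussExpPrimitive_atTop hl c A B)
  rwa [integral_neg, zero_sub, neg_inj] at key

end Primitive

theorem stmt6 (x y l : ℝ) (hl : 0 < l) :
    (∫ z in Set.Ioi y, Phi (l + (x - z) / (2 * l)) * Real.exp (-z) * (z ^ 4 / 8 - z ^ 2 / 2 - 2))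
      = (y ^ 4 + 4 * y ^ 3 + 8 * y ^ 2 + 16 * y) / 8 * Real.exp (-y) * Phi (l + (x - y) / (2 * l))
        + (4 * l ^ 6 * x - 3 * l ^ 4 * x ^ 2 + l ^ 2 * x ^ 3 - 2 * l ^ 8 - 8 * l ^ 6
            - x ^ 4 / 8 - 2 * l ^ 2 * x - x ^ 3 / 2 + 2 * l ^ 4 + 6 * l ^ 4 * x - x ^ 2 - 2 * x)
          * Real.exp (-x) * (1 - Phi (l + (y - x) / (2 * l)))
        + (2 * l ^ 7 - l * x ^ 3 / 4 - l ^ 5 * y + l ^ 3 * y ^ 2 / 2 + l ^ 3 * x * y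
            - 3 * l ^ 5 * x + 3 * l ^ 3 * x ^ 2 / 2 - l * y ^ 3 / 4 - l * y ^ 2 * x / 4
            - l * y * x ^ 2 / 4 - l ^ 3 * y - l * y ^ 2 - l * x * y - l ^ 3 * x - l * x ^ 2
            - 4 * l ^ 3 + 6 * l ^ 5 - 2 * l * x - 2 * l * y - 4 * l)
          * Real.exp (-x) * phi (l + (y - x) / (2 * l)) := by
  set A : ℝ[X] := C (1 / 8) * X ^ 4 + C (1 / 2) * X ^ 3 + C 1 * X ^ 2 + C 2 * X
  set B : ℝ[X] := C (-l / 4) * X ^ 3 + C (l ^ 3 / 2 - l * x / 4 - l) * X ^ 2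
    + C (-l ^ 5 + l ^ 3 * x - l * x ^ 2 / 4 - l ^ 3 - l * x - 2 * l) * X
    + C (2 * l ^ 7 - l * x ^ 3 / 4 - 3 * l ^ 5 * x + 3 * l ^ 3 * x ^ 2 / 2 - l ^ 3 * x - l * x ^ 2
      - 4 * l ^ 3 + 6 * l ^ 5 - 2 * l * x - 4 * l)
  have hA (z : ℝ) : (A - derivative A).eval z = z ^ 4 / 8 - z ^ 2 / 2 - 2 := by
    simp only [A, derivative_add, derivative_C_mul_X_pow, derivative_C_mul_X, eval_sub, eval_add,
      eval_mul, eval_C, eval_pow, eval_X]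
    ring
  set c : ℝ := 4 * l ^ 6 * x - 3 * l ^ 4 * x ^ 2 + l ^ 2 * x ^ 3 - 2 * l ^ 8 - 8 * l ^ 6
    - x ^ 4 / 8 - 2 * l ^ 2 * x - x ^ 3 / 2 + 2 * l ^ 4 + 6 * l ^ 4 * x - x ^ 2 - 2 * x
  have hAB (z : ℝ) : B.derivative.eval z - (l + (z - x) / (2 * l)) / (2 * l) * B.eval z
      = (A.eval z + c) / (2 * l) := by
    simp only [A, B, c, derivative_add, derivative_C_mul_X_pow, derivative_C_mul_X, derivative_C,
      eval_add, eval_mul, eval_C, eval_pow, eval_X, eval_zero]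
    field_simp
    ring
  have key := integral_Ioi_Phi_mul_exp_neg_mul_eval hl c y A B hAB
  simp only [hA] at key
  rw [key, gaussExpPrimitive]
  simp only [A, B, eval_add, eval_mul, eval_C, eval_pow, eval_X]
  ring
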